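/- Assume ᾱ ∉ A_0 and m = d. Let B_0 = {(β_ℓ)_{0≤ℓ<d} ∈ (ℝ^d)^d : the d vectors (|β̂_ℓ(ω)|²)_{ω ∈ Ω_d} are linearly independent, and |β̂_ℓ(ω)|² > 0 for all ℓ < d and ω ∈ Ω_d}. Almost surely, every equilibrium of the game (ℝ^d, B_0, V_n) — i.e. every (α̊, β̊) ∈ ℝ^d × B_0 with ∇_α V_n(α̊, β̊) = 0 and ∇_β V_n(α̊, β̊) = 0 — satisfies α̊ ∈ A_n and is a Nash equilibrium: V_n(α̊, β) ≤ V_n(α̊, β̊) ≤ V_n(α, β̊) for all α ∈ ℝ^d and β ∈ B_0. -/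

import Mathlib

open MeasureTheory ProbabilityTheory Filter
open scoped Real

noncomputable section

/-- Discrete Fourier transform of `x : ℝ^d` at frequency `ω = 2πk/d`. -/
def dft (d : ℕ) (x : Fin d → ℝ) (k : Fin d) : ℂ :=
  ∑ u : Fin d, (x u : ℂ) *
    Complex.exp (-(2 * Real.pi * Complex.I * ((k : ℕ) : ℂ) * ((u : ℕ) : ℂ)) / (d : ℂ))

/-- Circular convolution on `ℝ^d` (indices mod `d`). -/
def cconv (d : ℕ) (a z : Fin d → ℝ) : Fin d → ℝ := fun u => ∑ v : Fin d, a v * z (u - v)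

/-- Covariance matrix of `a ⋆ Z`, `Z ~ N(0, I_d)` white noise. -/
def covMat (d : ℕ) (a : Fin d → ℝ) : Matrix (Fin d) (Fin d) ℝ :=
  Matrix.of fun u u' => ∑ v : Fin d, a (u - v) * a (u' - v)

/-- Spectral (operator) norm of a matrix. -/
def specNorm (d : ℕ) (M : Matrix (Fin d) (Fin d) ℝ) : ℝ :=
  ‖Matrix.toEuclideanCLM (𝕜 := ℝ) M‖

/-- Euclidean norm. -/
def l2norm (d : ℕ) (x : Fin d → ℝ) : ℝ := Real.sqrt (∑ u : Fin d, x u ^ 2)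

/-- Empirical covariance matrix of the first `n` samples. -/
def empCov (d n : ℕ) (y : ℕ → Fin d → ℝ) : Matrix (Fin d) (Fin d) ℝ :=
  (n : ℝ)⁻¹ • ∑ i ∈ Finset.range n, Matrix.vecMulVec (y i) (y i)

/-- Empirical mean of `|ŷ(ω)|²` over the first `n` samples. -/
def empPS (d n : ℕ) (y : ℕ → Fin d → ℝ) (k : Fin d) : ℝ :=
  (n : ℝ)⁻¹ * ∑ i ∈ Finset.range n, Complex.normSq (dft d (y i) k)

/-- The consistent-generator set `A_n` (for a fixed sample `(z̄_i, z_i)_{i<n}`). -/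
def An (d n : ℕ) (abar : Fin d → ℝ) (zbar z : ℕ → Fin d → ℝ) : Set (Fin d → ℝ) :=
  {a | ∀ k : Fin d, Complex.normSq (dft d a k) =
      empPS d n (fun i => cconv d abar (zbar i)) k / empPS d n z k}


/-- The combined family of all Gaussian coordinates of the two sample sequences
`z̄` (at `false`) and `z` (at `true`). -/
def coords {Ω : Type*} (d : ℕ) (zbar z : ℕ → Ω → Fin d → ℝ) :
    Bool × ℕ × Fin d → Ω → ℝ :=
  fun p ω => if p.1 then z p.2.1 ω p.2.2 else zbar p.2.1 ω p.2.2

/-- `(z̄_i)` and `(z_i)` are mutually independent i.i.d. `N(0, I_d)` random vectors: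
all the real coordinates are independent standard Gaussians. -/
def IsWhiteNoisePair {Ω : Type*} [MeasureSpace Ω] (d : ℕ)
    (zbar z : ℕ → Ω → Fin d → ℝ) : Prop :=
  (∀ i, Measurable (zbar i)) ∧ (∀ i, Measurable (z i)) ∧
    iIndepFun (coords d zbar z) ℙ ∧
    ∀ p : Bool × ℕ × Fin d, Measure.map (coords d zbar z p) ℙ = gaussianReal 0 1

/-- `r_{n,ℓ}(α, β) = E_n(‖X ⋆ β_ℓ‖²) − E_n(‖(α ⋆ Z) ⋆ β_ℓ‖²)` for the convolutional
discriminator, given samples `x_i = xs i`, `z_i = zs i`. -/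
def rConv (d n : ℕ) (xs zs : ℕ → Fin d → ℝ) (a : Fin d → ℝ) (bl : Fin d → ℝ) : ℝ :=
  (n : ℝ)⁻¹ * ∑ i ∈ Finset.range n, ∑ u : Fin d, cconv d (xs i) bl u ^ 2
    - (n : ℝ)⁻¹ * ∑ i ∈ Finset.range n, ∑ u : Fin d, cconv d (cconv d a (zs i)) bl u ^ 2

/-- The convolutional-discriminator objective `V_n(α, β) = ∑_{ℓ<m} r_{n,ℓ}(α, β)²`. -/
def VConv (d n m : ℕ) (xs zs : ℕ → Fin d → ℝ) (a : Fin d → ℝ)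
    (b : Fin m → Fin d → ℝ) : ℝ :=
  ∑ ℓ : Fin m, rConv d n xs zs a (b ℓ) ^ 2

/-- The discriminator subset `B_0`: the squared moduli of the DFTs of the `β_ℓ` are
linearly independent and everywhere strictly positive. -/
def B0 (d : ℕ) : Set (Fin d → Fin d → ℝ) :=
  {b | LinearIndependent ℝ
        (fun ℓ : Fin d => fun k : Fin d => Complex.normSq (dft d (b ℓ) k)) ∧
      ∀ ℓ k : Fin d, 0 < Complex.normSq (dft d (b ℓ) k)}


/-!
By the convolution theorem and Parseval's identity,
`r_{n,ℓ}(α, β) = d⁻¹ ∑_ω |β̂_ℓ(ω)|² s(ω)` with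
`s(ω) = E_n|X̂(ω)|² - |α̂(ω)|² E_n|Ẑ(ω)|²` independent of `β`. As `r_{n,ℓ}(α, ·)²` is
homogeneous of degree 4, Euler's identity turns `∇_{β_ℓ} V_n = 0` into `4 r_{n,ℓ}² = 0`.
Linear independence of the `|β̂_ℓ|²` then forces `s = 0`, which is `α̊ ∈ A_n` because
`E_n|Ẑ(ω)|² > 0` almost surely (the real part of `Ẑ_0(ω)` is a standard Gaussian coordinate
plus an independent variable). Finally `s = 0` makes `V_n(α̊, ·)` vanish identically, and
`V_n ≥ 0`.
-/

lemma pow_val_add_of_pow_eq_one {M : Type*} [Monoid M] {d : ℕ} {ζ : M} (hζ : ζ ^ d = 1)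
    (u v : Fin d) : ζ ^ ((u + v : Fin d) : ℕ) = ζ ^ (u : ℕ) * ζ ^ (v : ℕ) := by
  rw [Fin.val_add, ← pow_eq_pow_mod _ hζ, pow_add]

lemma sum_cconv_mul_pow {d : ℕ} {ζ : ℂ} (hζ : ζ ^ d = 1) (a z : Fin d → ℝ) :
    ∑ u : Fin d, (cconv d a z u : ℂ) * ζ ^ (u : ℕ) =
      (∑ v : Fin d, (a v : ℂ) * ζ ^ (v : ℕ)) *
        ∑ w : Fin d, (z w : ℂ) * ζ ^ (w : ℕ) := by
  rw [Finset.sum_mul_sum]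
  simp only [cconv, Complex.ofReal_sum, Complex.ofReal_mul, Finset.sum_mul]
  rw [Finset.sum_comm]
  refine Finset.sum_congr rfl fun v _ => ?_
  have : NeZero d := NeZero.of_pos v.pos
  rw [← Equiv.sum_comp (Equiv.addRight v) (fun u => (a v : ℂ) * z (u - v) * ζ ^ (u : ℕ))]
  refine Finset.sum_congr rfl fun w _ => ?_
  simp only [Equiv.coe_addRight, add_sub_cancel_right, pow_val_add_of_pow_eq_one hζ]
  ring

lemma IsPrimitiveRoot.sum_pow_mul_inv_pow {d : ℕ} {ζ : ℂ} (hζ : IsPrimitiveRoot ζ d)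
    (u u' : Fin d) :
    ∑ k : Fin d, (ζ ^ (u : ℕ)) ^ (k : ℕ) * ((ζ ^ (u' : ℕ)) ^ (k : ℕ))⁻¹ =
      if u = u' then (d : ℂ) else 0 := by
  have hζ0 : ζ ≠ 0 := hζ.ne_zero u.pos.ne'
  set ρ := ζ ^ (u : ℕ) / ζ ^ (u' : ℕ)
  have hρ (k : ℕ) : (ζ ^ (u : ℕ)) ^ k * ((ζ ^ (u' : ℕ)) ^ k)⁻¹ = ρ ^ k := by
    rw [div_pow, div_eq_mul_inv]
  simp only [hρ]
  rw [Fin.sum_univ_eq_sum_range (ρ ^ ·)]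
  split_ifs with h
  · simp [ρ, h, hζ0]
  · have hρ1 : ρ ≠ 1 := fun h1 => h (Fin.ext (hζ.pow_inj u.isLt u'.isLt
      ((div_eq_one_iff_eq (pow_ne_zero _ hζ0)).mp h1)))
    rw [geom_sum_eq hρ1, div_pow, ← pow_mul, ← pow_mul, mul_comm (u : ℕ),
      mul_comm (u' : ℕ), pow_mul, pow_mul, hζ.pow_eq_one]
    simp

lemma IsPrimitiveRoot.sum_normSq_sum_mul_pow {d : ℕ} {ζ : ℂ} (hζ : IsPrimitiveRoot ζ d)
    (x : Fin d → ℝ) :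
    ∑ k : Fin d, Complex.normSq (∑ u : Fin d, (x u : ℂ) * (ζ ^ (u : ℕ)) ^ (k : ℕ)) =
      d * ∑ u : Fin d, x u ^ 2 := by
  have hconj (u k : Fin d) :
      (starRingEnd ℂ) ((ζ ^ (u : ℕ)) ^ (k : ℕ)) = ((ζ ^ (u : ℕ)) ^ (k : ℕ))⁻¹ := by
    rw [Complex.inv_eq_conj (by simp [hζ.norm'_eq_one u.pos.ne'])]
  apply Complex.ofReal_injective
  push_cast
  calc ∑ k : Fin d,
        ((Complex.normSq (∑ u : Fin d, (x u : ℂ) * (ζ ^ (u : ℕ)) ^ (k : ℕ)) : ℝ) : ℂ)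
      = ∑ k : Fin d, ∑ u : Fin d, ∑ u' : Fin d, (x u : ℂ) * x u' *
          ((ζ ^ (u : ℕ)) ^ (k : ℕ) * ((ζ ^ (u' : ℕ)) ^ (k : ℕ))⁻¹) := by
        refine Finset.sum_congr rfl fun k _ => ?_
        rw [← Complex.mul_conj, map_sum, Finset.sum_mul_sum]
        simp only [map_mul, Complex.conj_ofReal, hconj]
        exact Finset.sum_congr rfl fun u _ => Finset.sum_congr rfl fun u' _ => by ring
    _ = ∑ u : Fin d, ∑ u' : Fin d, (x u : ℂ) * x u' * (if u = u' then (d : ℂ) else 0) := by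
        simp only [← hζ.sum_pow_mul_inv_pow, Finset.mul_sum]
        rw [Finset.sum_comm]
        exact Finset.sum_congr rfl fun u _ => Finset.sum_comm
    _ = d * ∑ u : Fin d, (x u : ℂ) ^ 2 := by
        simp only [mul_ite, mul_zero, Finset.sum_ite_eq, Finset.mem_univ, if_true, sq,
          Finset.mul_sum]
        exact Finset.sum_congr rfl fun u _ => by ring

open Complex in
lemma Complex.isPrimitiveRoot_exp_neg {d : ℕ} (hd : d ≠ 0) :
    IsPrimitiveRoot (exp (-(2 * π * I / d))) d := by
  rw [exp_neg]
  exact (isPrimitiveRoot_exp d hd).inv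

open Complex in
lemma dft_eq_sum_mul_pow (d : ℕ) (x : Fin d → ℝ) (k : Fin d) :
    dft d x k = ∑ u : Fin d, (x u : ℂ) * exp (-(2 * π * I / d)) ^ ((k : ℕ) * (u : ℕ)) := by
  refine Finset.sum_congr rfl fun u _ => ?_
  rw [← exp_nat_mul]
  push_cast
  ring_nf

lemma dft_cconv (d : ℕ) (a z : Fin d → ℝ) (k : Fin d) :
    dft d (cconv d a z) k = dft d a k * dft d z k := by
  simp only [dft_eq_sum_mul_pow, pow_mul]
  refine sum_cconv_mul_pow ?_ a z
  rw [pow_right_comm, (Complex.isPrimitiveRoot_exp_neg k.pos.ne').pow_eq_one, one_pow]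

lemma sum_normSq_dft (d : ℕ) (x : Fin d → ℝ) :
    ∑ k : Fin d, Complex.normSq (dft d x k) = d * ∑ u : Fin d, x u ^ 2 := by
  rcases Nat.eq_zero_or_pos d with rfl | hd
  · simp
  simp only [dft_eq_sum_mul_pow, pow_mul']
  exact (Complex.isPrimitiveRoot_exp_neg hd.ne').sum_normSq_sum_mul_pow x

lemma sum_sq_cconv (d : ℕ) (y b : Fin d → ℝ) :
    ∑ u : Fin d, cconv d y b u ^ 2 =
      (d : ℝ)⁻¹ * ∑ k : Fin d, Complex.normSq (dft d y k) * Complex.normSq (dft d b k) := by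
  rcases Nat.eq_zero_or_pos d with rfl | hd
  · simp
  simp only [← Complex.normSq_mul, ← dft_cconv, sum_normSq_dft]
  field_simp

lemma fderiv_eq_zero_of_hasDerivAt_update {ι : Type*} [Fintype ι] [DecidableEq ι]
    {F : (ι → ℝ) → ℝ} {x : ι → ℝ} (hF : DifferentiableAt ℝ F x)
    (h : ∀ i, HasDerivAt (fun t => F (Function.update x i t)) 0 (x i)) :
    fderiv ℝ F x = 0 := by
  refine ContinuousLinearMap.coe_injective (LinearMap.pi_ext fun i c => ?_)
  have hi : HasDerivAt (fun t => F (Function.update x i t))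
      (fderiv ℝ F x (Pi.single i 1)) (x i) :=
    hF.hasFDerivAt.comp_hasDerivAt_of_eq (x i) (hasDerivAt_update x i (x i))
      (Function.update_eq_self i x).symm
  have hc : Pi.single i c = c • (Pi.single i 1 : ι → ℝ) := by
    rw [← Pi.single_smul, smul_eq_mul, mul_one]
  simp [hc, (h i).unique hi]

lemma fderiv_apply_self_of_homogeneous {E : Type*} [NormedAddCommGroup E] [NormedSpace ℝ E]
    {F : E → ℝ} {x : E} {p : ℕ} (hF : DifferentiableAt ℝ F x)
    (hhom : ∀ t : ℝ, F (t • x) = t ^ p * F x) :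
    fderiv ℝ F x x = p * F x := by
  have hline : HasDerivAt (fun t : ℝ => F (t • x)) (fderiv ℝ F x x) 1 := by
    refine hF.hasFDerivAt.comp_hasDerivAt_of_eq 1 ?_ (one_smul ℝ x).symm
    simpa using (hasDerivAt_id (1 : ℝ)).smul_const x
  have hpow : HasDerivAt (fun t : ℝ => t ^ p * F x) (p * F x) 1 := by
    simpa using (hasDerivAt_pow p (1 : ℝ)).mul_const (F x)
  simp only [hhom] at hline
  exact hline.unique hpow

lemma eq_zero_of_linearIndependent_of_forall_sum_mul_eq_zero {K ι : Type*} [Field K]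
    [Fintype ι] [DecidableEq ι] {w : ι → ι → K} (hw : LinearIndependent K w) {s : ι → K}
    (h : ∀ ℓ, ∑ k, w ℓ k * s k = 0) : s = 0 := by
  have hunit : IsUnit (Matrix.of w) := Matrix.linearIndependent_rows_iff_isUnit.mp hw
  refine Matrix.mulVec_injective_iff_isUnit.mpr hunit ?_
  ext ℓ
  simpa [Matrix.mulVec, dotProduct] using h ℓ

def spectralGap (d n : ℕ) (xs zs : ℕ → Fin d → ℝ) (a : Fin d → ℝ) (k : Fin d) : ℝ :=
  empPS d n xs k - Complex.normSq (dft d a k) * empPS d n zs k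

lemma rConv_eq_sum_normSq_dft_mul_spectralGap (d n : ℕ) (xs zs : ℕ → Fin d → ℝ)
    (a b : Fin d → ℝ) :
    rConv d n xs zs a b =
      (d : ℝ)⁻¹ * ∑ k : Fin d, Complex.normSq (dft d b k) * spectralGap d n xs zs a k := by
  simp only [rConv, spectralGap, empPS, sum_sq_cconv, dft_cconv, Complex.normSq_mul,
    Finset.mul_sum, mul_sub, Finset.sum_sub_distrib]
  rw [Finset.sum_comm (s := Finset.range n), Finset.sum_comm (s := Finset.range n)]
  congr 1 <;> exact Finset.sum_congr rfl fun k _ => Finset.sum_congr rfl fun i _ => by ring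

lemma cconv_smul_right (d : ℕ) (y b : Fin d → ℝ) (t : ℝ) :
    cconv d y (t • b) = t • cconv d y b := by
  ext u
  simp only [cconv, Pi.smul_apply, smul_eq_mul, Finset.mul_sum]
  exact Finset.sum_congr rfl fun v _ => by ring

lemma rConv_smul_right (d n : ℕ) (xs zs : ℕ → Fin d → ℝ) (a b : Fin d → ℝ) (t : ℝ) :
    rConv d n xs zs a (t • b) = t ^ 2 * rConv d n xs zs a b := by
  simp only [rConv, cconv_smul_right, Pi.smul_apply, smul_eq_mul, mul_pow, ← Finset.mul_sum]
  ring

lemma differentiable_rConv (d n : ℕ) (xs zs : ℕ → Fin d → ℝ) (a : Fin d → ℝ) :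
    Differentiable ℝ (rConv d n xs zs a) := by
  unfold rConv cconv
  fun_prop

lemma VConv_update (d n m : ℕ) (xs zs : ℕ → Fin d → ℝ) (a : Fin d → ℝ)
    (b : Fin m → Fin d → ℝ) (ℓ : Fin m) (γ : Fin d → ℝ) :
    VConv d n m xs zs a (Function.update b ℓ γ) =
      rConv d n xs zs a γ ^ 2 +
        ∑ ℓ' ∈ Finset.univ.erase ℓ, rConv d n xs zs a (b ℓ') ^ 2 := by
  rw [VConv, ← Finset.add_sum_erase _ _ (Finset.mem_univ ℓ), Function.update_self]
  congr 1
  refine Finset.sum_congr rfl fun ℓ' hℓ' => ?_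
  rw [Function.update_of_ne (Finset.ne_of_mem_erase hℓ')]

lemma rConv_eq_zero_of_hasDerivAt_VConv {d n m : ℕ} {xs zs : ℕ → Fin d → ℝ}
    {a : Fin d → ℝ} {b : Fin m → Fin d → ℝ} {ℓ : Fin m}
    (h : ∀ v, HasDerivAt (fun t =>
      VConv d n m xs zs a (Function.update b ℓ (Function.update (b ℓ) v t))) 0 (b ℓ v)) :
    rConv d n xs zs a (b ℓ) = 0 := by
  set G : (Fin d → ℝ) → ℝ := fun γ => rConv d n xs zs a γ ^ 2
  have hGdiff : DifferentiableAt ℝ G (b ℓ) := ((differentiable_rConv d n xs zs a).pow 2) _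
  have hGcrit : fderiv ℝ G (b ℓ) = 0 := by
    refine fderiv_eq_zero_of_hasDerivAt_update hGdiff fun v => ?_
    simpa only [VConv_update, hasDerivAt_add_const_iff] using h v
  have hEuler := fderiv_apply_self_of_homogeneous (p := 4) hGdiff fun t => by
    simp only [G, rConv_smul_right]
    ring
  rw [hGcrit] at hEuler
  simpa [G] using hEuler

lemma spectralGap_eq_zero_of_forall_rConv_eq_zero {d n : ℕ} {xs zs : ℕ → Fin d → ℝ}
    {a : Fin d → ℝ} {b : Fin d → Fin d → ℝ}
    (hb : LinearIndependent ℝ fun ℓ k => Complex.normSq (dft d (b ℓ) k))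
    (h : ∀ ℓ, rConv d n xs zs a (b ℓ) = 0) :
    spectralGap d n xs zs a = 0 := by
  refine eq_zero_of_linearIndependent_of_forall_sum_mul_eq_zero hb fun ℓ => ?_
  have hd : (d : ℝ)⁻¹ ≠ 0 := inv_ne_zero (Nat.cast_ne_zero.mpr ℓ.pos.ne')
  simpa [rConv_eq_sum_normSq_dft_mul_spectralGap, hd] using h ℓ

lemma VConv_eq_zero_of_spectralGap_eq_zero {d n m : ℕ} {xs zs : ℕ → Fin d → ℝ}
    {a : Fin d → ℝ} (h : spectralGap d n xs zs a = 0) (b : Fin m → Fin d → ℝ) :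
    VConv d n m xs zs a b = 0 := by
  simp [VConv, rConv_eq_sum_normSq_dft_mul_spectralGap, h]

lemma VConv_nonneg (d n m : ℕ) (xs zs : ℕ → Fin d → ℝ) (a : Fin d → ℝ)
    (b : Fin m → Fin d → ℝ) : 0 ≤ VConv d n m xs zs a b :=
  Finset.sum_nonneg fun _ _ => sq_nonneg _

lemma empPS_pos {d n : ℕ} (hn : 0 < n) {y : ℕ → Fin d → ℝ} {k : Fin d}
    (hy : dft d (y 0) k ≠ 0) : 0 < empPS d n y k :=
  mul_pos (by positivity) (Finset.sum_pos' (fun i _ => Complex.normSq_nonneg _)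
    ⟨0, Finset.mem_range.mpr hn, Complex.normSq_pos.mpr hy⟩)

lemma mem_An_of_spectralGap_eq_zero {d n : ℕ} {abar a : Fin d → ℝ}
    {zbar z : ℕ → Fin d → ℝ}
    (h : spectralGap d n (fun i => cconv d abar (zbar i)) z a = 0)
    (hz : ∀ k, 0 < empPS d n z k) : a ∈ An d n abar zbar z := fun k => by
  rw [eq_div_iff (hz k).ne']
  exact (sub_eq_zero.mp (congrFun h k)).symm

lemma measure_add_eq_zero_of_indepFun {Ω : Type*} [MeasurableSpace Ω] {μ : Measure Ω}
    [IsFiniteMeasure μ] {X Y : Ω → ℝ} (hX : Measurable X) (hY : Measurable Y)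
    (hXY : IndepFun X Y μ) [NullSingletonClass (μ.map X)] :
    μ {ω | X ω + Y ω = 0} = 0 := by
  have hS : MeasurableSet {p : ℝ × ℝ | p.1 + p.2 = 0} :=
    measurableSet_eq_fun (by fun_prop) measurable_const
  rw [← Set.preimage_ofPred_eq (p := fun p : ℝ × ℝ => p.1 + p.2 = 0)
      (f := fun ω => (X ω, Y ω)),
    ← Measure.map_apply (hX.prodMk hY) hS,
    (indepFun_iff_map_prod_eq_prod_map_map hX.aemeasurable hY.aemeasurable).mp hXY,
    Measure.prod_apply_symm hS]
  have hslice (y : ℝ) : (fun x => (x, y)) ⁻¹' {p : ℝ × ℝ | p.1 + p.2 = 0} = {-y} := by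
    ext x; simp [eq_neg_iff_add_eq_zero]
  simp [hslice]

lemma ProbabilityTheory.iIndepFun.measure_sum_mul_eq_zero {Ω ι : Type*} [MeasurableSpace Ω]
    {μ : Measure Ω} [IsProbabilityMeasure μ] [Fintype ι] [DecidableEq ι]
    {g : ι → Ω → ℝ}
    (hmeas : ∀ j, Measurable (g j)) (hind : iIndepFun g μ) {i : ι}
    [NullSingletonClass (μ.map (g i))] {c : ι → ℝ} (hc : c i = 1) :
    μ {ω | ∑ j, c j * g j ω = 0} = 0 := by
  set f : ι → Ω → ℝ := fun j ω => c j * g j ω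
  have hfmeas (j : ι) : Measurable (f j) := (hmeas j).const_mul (c j)
  have hfind : iIndepFun f μ := hind.comp (fun j x => c j * x) fun j => measurable_const_mul (c j)
  have hfi : f i = g i := by simp [f, hc]
  have hsplit (ω : Ω) : ∑ j, c j * g j ω = g i ω + ∑ j ∈ Finset.univ.erase i, f j ω := by
    rw [← Finset.add_sum_erase _ _ (Finset.mem_univ i), hc, one_mul]
  simp only [hsplit]
  refine measure_add_eq_zero_of_indepFun (hmeas i) (Finset.measurable_sum _ fun j _ => hfmeas j) ?_
  rw [← hfi, ← Finset.sum_fn]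
  exact (hfind.indepFun_finsetSum_of_notMem hfmeas (Finset.notMem_erase i _)).symm

lemma IsWhiteNoisePair.ae_dft_ne_zero {Ω : Type*} [MeasureSpace Ω]
    [IsProbabilityMeasure (ℙ : Measure Ω)] {d : ℕ} {zbar z : ℕ → Ω → Fin d → ℝ}
    (hwn : IsWhiteNoisePair d zbar z) (i : ℕ) :
    ∀ᵐ ω ∂ℙ, ∀ k : Fin d, dft d (z i ω) k ≠ 0 := by
  obtain ⟨-, hzmeas, hind, hgauss⟩ := hwn
  rw [ae_all_iff]
  intro k
  have : NeZero d := NeZero.of_pos k.pos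
  set g : Fin d → Ω → ℝ := fun u ω => z i ω u
  have hgmeas (u : Fin d) : Measurable (g u) := (measurable_pi_apply u).comp (hzmeas i)
  have hgind : iIndepFun g ℙ :=
    hind.precomp (g := fun u => (true, i, u)) fun u v huv => by simpa using huv
  have : NullSingletonClass ((ℙ : Measure Ω).map (g 0)) := by
    rw [show g 0 = coords d zbar z (true, i, 0) from rfl, hgauss]
    exact nullSingletonClass_gaussianReal one_ne_zero
  set c : Fin d → ℝ := fun u =>
    (Complex.exp (-(2 * π * Complex.I / d)) ^ ((k : ℕ) * (u : ℕ))).re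
  have hnull := hgind.measure_sum_mul_eq_zero hgmeas (i := 0) (c := c) (by simp [c])
  refine measure_mono_null (fun ω hω => ?_) hnull
  have hre := congrArg Complex.re (not_not.mp hω)
  simp only [dft_eq_sum_mul_pow, Complex.re_sum, Complex.re_ofReal_mul, Complex.zero_re] at hre
  simpa only [Set.mem_ofPred_eq, g, c, mul_comm (c _)] using hre

theorem stmt16_general {d n : ℕ} (hn : 1 ≤ n)
    {Ω : Type*} [MeasureSpace Ω] [IsProbabilityMeasure (ℙ : Measure Ω)]
    (abar : Fin d → ℝ)
    (zbar z : ℕ → Ω → Fin d → ℝ) (hwn : IsWhiteNoisePair d zbar z) :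
    ∀ᵐ ω ∂ℙ, ∀ (a₀ : Fin d → ℝ), ∀ b₀ ∈ B0 d,
      -- `∇_α V_n(α̊, β̊) = 0`
      (∀ u : Fin d,
        HasDerivAt (fun t : ℝ =>
          VConv d n d (fun i => cconv d abar (zbar i ω)) (fun i => z i ω)
            (Function.update a₀ u t) b₀) 0 (a₀ u)) →
      -- `∇_β V_n(α̊, β̊) = 0`
      (∀ ℓ v : Fin d,
        HasDerivAt (fun t : ℝ =>
          VConv d n d (fun i => cconv d abar (zbar i ω)) (fun i => z i ω) a₀
            (Function.update b₀ ℓ (Function.update (b₀ ℓ) v t))) 0 (b₀ ℓ v)) →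
      a₀ ∈ An d n abar (fun i => zbar i ω) (fun i => z i ω) ∧
        (∀ b ∈ B0 d,
          VConv d n d (fun i => cconv d abar (zbar i ω)) (fun i => z i ω) a₀ b ≤
            VConv d n d (fun i => cconv d abar (zbar i ω)) (fun i => z i ω) a₀ b₀) ∧
        (∀ a : Fin d → ℝ,
          VConv d n d (fun i => cconv d abar (zbar i ω)) (fun i => z i ω) a₀ b₀ ≤
            VConv d n d (fun i => cconv d abar (zbar i ω)) (fun i => z i ω) a b₀) := by
  filter_upwards [hwn.ae_dft_ne_zero 0] with ω hz a₀ b₀ hb₀ _ hβ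
  have hgap := spectralGap_eq_zero_of_forall_rConv_eq_zero hb₀.1 fun ℓ =>
    rConv_eq_zero_of_hasDerivAt_VConv (hβ ℓ)
  have hV := VConv_eq_zero_of_spectralGap_eq_zero (m := d) hgap
  refine ⟨mem_An_of_spectralGap_eq_zero hgap fun k => empPS_pos hn (hz k), fun b _ => ?_,
    fun a => ?_⟩
  · rw [hV, hV]
  · rw [hV]
    exact VConv_nonneg _ _ _ _ _ _ _

theorem stmt16 {d n : ℕ} (hd : 1 ≤ d) (hn : 1 ≤ n)
    {Ω : Type*} [MeasureSpace Ω] [IsProbabilityMeasure (ℙ : Measure Ω)]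
    (abar : Fin d → ℝ) (habar : ∀ k : Fin d, dft d abar k ≠ 0)
    (zbar z : ℕ → Ω → Fin d → ℝ) (hwn : IsWhiteNoisePair d zbar z) :
    ∀ᵐ ω ∂ℙ, ∀ (a₀ : Fin d → ℝ), ∀ b₀ ∈ B0 d,
      -- `∇_α V_n(α̊, β̊) = 0`
      (∀ u : Fin d,
        HasDerivAt (fun t : ℝ =>
          VConv d n d (fun i => cconv d abar (zbar i ω)) (fun i => z i ω)
            (Function.update a₀ u t) b₀) 0 (a₀ u)) →
      -- `∇_β V_n(α̊, β̊) = 0`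
      (∀ ℓ v : Fin d,
        HasDerivAt (fun t : ℝ =>
          VConv d n d (fun i => cconv d abar (zbar i ω)) (fun i => z i ω) a₀
            (Function.update b₀ ℓ (Function.update (b₀ ℓ) v t))) 0 (b₀ ℓ v)) →
      a₀ ∈ An d n abar (fun i => zbar i ω) (fun i => z i ω) ∧
        (∀ b ∈ B0 d,
          VConv d n d (fun i => cconv d abar (zbar i ω)) (fun i => z i ω) a₀ b ≤
            VConv d n d (fun i => cconv d abar (zbar i ω)) (fun i => z i ω) a₀ b₀) ∧
        (∀ a : Fin d → ℝ,
          VConv d n d (fun i => cconv d abar (zbar i ω)) (fun i => z i ω) a₀ b₀ ≤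
            VConv d n d (fun i => cconv d abar (zbar i ω)) (fun i => z i ω) a b₀) :=
  stmt16_general hn abar zbar z hwn
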